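/- arXiv:2209.02475 — 5 statements merged into one kernel-verified Lean document; each statement's English description precedes it below -/
import Mathlib

section
/- Let k ≥ 2, let f_0,…,f_{k−1} : ℝ≥0 → ℝ≥0 be continuous, strictly increasing, unbounded with f_i(0)=0, and let b_0 ≥ ⋯ ≥ b_{k−1} > 0. Fix n > 0 and t > 0 such that ∑_{i=0}^{k−1} f_i⁻¹(t) ≥ n. Define X by the PARTITION procedure: initialize x_i = f_i⁻¹(t) and subtract the excess n_plus = ∑ x_i − n from x_0, then x_1, etc. If the procedure terminates with index i < k−1, then the resulting X satisfies ∑ x_j = n and max_j f_j(x_j) = t. -/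
open Finset

/-- feasibility of the PARTITION output: its coordinates are
nonnegative, sum to n, and the maximum of f_j(x_j) equals t. -/
theorem partition_output_feasible
    (k : ℕ) (hk : 2 ≤ k) (f finv : Fin k → ℝ → ℝ)
    (hcont : ∀ j, ContinuousOn (f j) (Set.Ici 0))
    (hmono : ∀ j, StrictMonoOn (f j) (Set.Ici 0))
    (hzero : ∀ j, f j 0 = 0)
    (hunb : ∀ j, Filter.Tendsto (f j) Filter.atTop Filter.atTop)
    (hinv : ∀ j t, 0 ≤ t → 0 ≤ finv j t ∧ f j (finv j t) = t)
    (n t : ℝ) (hn : 0 < n) (ht : 0 < t)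
    (hfeas : n ≤ ∑ j, finv j t)
    (i : Fin k) (hik : (i : ℕ) < k - 1)
    (hi : ∑ m ∈ univ.filter (fun m => i < m), finv m t ≤ n)
    (himin : ∀ i' : Fin k, i' < i → n < ∑ m ∈ univ.filter (fun m => i' < m), finv m t)
    (X : Fin k → ℝ)
    (hX : ∀ j : Fin k, X j =
      if (j : ℕ) < (i : ℕ) then 0
      else if j = i then n - ∑ m ∈ univ.filter (fun m => i < m), finv m t
      else finv j t) :
    (∀ j, 0 ≤ X j) ∧ (∑ j, X j = n) ∧
      IsGreatest {y | ∃ j : Fin k, y = f j (X j)} t := by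
  set S := ∑ m ∈ univ.filter (fun m => i < m), finv m t with hS
  have hinotin : i ∉ univ.filter (fun m => i < m) := by simp
  -- key : n ≤ finv i t + S
  have key : n ≤ finv i t + S := by
    rcases Nat.eq_zero_or_pos (i : ℕ) with h0 | hpos
    · have huniv : insert i (univ.filter (fun m => i < m)) = (univ : Finset (Fin k)) := by
        ext j
        simp only [Finset.mem_insert, Finset.mem_filter, Finset.mem_univ, true_and, iff_true]
        rcases eq_or_ne j i with rfl | hne
        · exact Or.inl rfl
        · right
          rw [Fin.lt_def]
          have := Fin.val_ne_of_ne hne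
          omega
      have := Finset.sum_insert (f := fun m => finv m t) hinotin
      rw [huniv] at this
      rw [← this]
      exact hfeas
    · set i' : Fin k := ⟨(i : ℕ) - 1, by omega⟩ with hi'
      have hi'i : i' < i := by rw [Fin.lt_def]; simp [hi']; omega
      have hfilt : univ.filter (fun m => i' < m) = insert i (univ.filter (fun m => i < m)) := by
        ext j
        simp only [Finset.mem_insert, Finset.mem_filter, Finset.mem_univ, true_and,
          Fin.lt_def]
        constructor
        · intro h
          rcases eq_or_ne j i with rfl | hne
          · exact Or.inl rfl
          · right; have := Fin.val_ne_of_ne hne; simp [hi'] at h; omega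
        · have hv : (i' : ℕ) = (i : ℕ) - 1 := rfl
          rintro (rfl | h)
          · omega
          · omega
      have := himin i' hi'i
      rw [hfilt, Finset.sum_insert hinotin] at this
      exact this.le
  have hXi : X i = n - S := by rw [hX i]; simp
  have hXgt : ∀ j : Fin k, i < j → X j = finv j t := by
    intro j hij
    rw [hX j]
    have h1 : ¬ ((j : ℕ) < (i : ℕ)) := by rw [Fin.lt_def] at hij; omega
    have h2 : j ≠ i := ne_of_gt hij
    simp [h1, h2]
  have hXlt : ∀ j : Fin k, j < i → X j = 0 := by
    intro j hij
    rw [hX j]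
    simp [Fin.lt_def.mp hij]
  have hnonneg : ∀ j, 0 ≤ X j := by
    intro j
    rcases lt_trichotomy j i with h | heq | h
    · rw [hXlt j h]
    · subst heq; rw [hXi]; linarith
    · rw [hXgt j h]; exact (hinv j t ht.le).1
  refine ⟨hnonneg, ?_, ?_⟩
  · -- sum
    rw [← Finset.add_sum_erase univ X (mem_univ i), hXi]
    have : ∑ j ∈ univ.erase i, X j = S := by
      rw [hS, Finset.sum_filter, ← Finset.add_sum_erase univ _ (mem_univ i)]
      simp only [lt_self_iff_false, if_false, zero_add]
      apply Finset.sum_congr rfl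
      intro j hj
      rcases lt_trichotomy j i with h | heq | h
      · rw [hXlt j h, if_neg (asymm h)]
      · exact absurd heq (Finset.ne_of_mem_erase hj)
      · rw [hXgt j h, if_pos h]
    rw [this]; ring
  · constructor
    · -- t is attained
      have hlast : (i : ℕ) + 1 < k := by omega
      refine ⟨⟨(i : ℕ) + 1, hlast⟩, ?_⟩
      have hij : i < (⟨(i : ℕ) + 1, hlast⟩ : Fin k) := by rw [Fin.lt_def]; simp
      rw [hXgt _ hij, (hinv _ t ht.le).2]
    · rintro y ⟨j, rfl⟩
      rcases lt_trichotomy j i with h | heq | h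
      · rw [hXlt j h, hzero j]; exact ht.le
      · subst heq
        rw [hXi]
        have h1 : n - S ∈ Set.Ici (0:ℝ) := by simp only [Set.mem_Ici]; linarith
        have h2 : finv j t ∈ Set.Ici (0:ℝ) := (hinv j t ht.le).1
        have h3 : n - S ≤ finv j t := by linarith
        calc f j (n - S) ≤ f j (finv j t) := (hmono j).monotoneOn h1 h2 h3
          _ = t := (hinv j t ht.le).2
      · rw [hXgt j h, (hinv j t ht.le).2]
end

section
/- In the setting of PARTITION (previous context), suppose the procedure terminates with i < k−1, giving vector X. Then for every vector Y ∈ ℝ^k with y_j ≥ 0, ∑ y_j = n, and max_j f_j(y_j) ≤ t, we have ∑_j b_j y_j ≥ ∑_j b_j x_j. -/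
open Finset

/-- the PARTITION output minimizes the linear sum objective among
all nonnegative vectors summing to n with max_j f_j(y_j) ≤ t. -/
theorem partition_output_optimal
    (k : ℕ) (hk : 2 ≤ k) (f finv : Fin k → ℝ → ℝ)
    (hcont : ∀ j, ContinuousOn (f j) (Set.Ici 0))
    (hmono : ∀ j, StrictMonoOn (f j) (Set.Ici 0))
    (hzero : ∀ j, f j 0 = 0)
    (hunb : ∀ j, Filter.Tendsto (f j) Filter.atTop Filter.atTop)
    (hinv : ∀ j t, 0 ≤ t → 0 ≤ finv j t ∧ f j (finv j t) = t)
    (b : Fin k → ℝ)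
    (hb_anti : ∀ i j : Fin k, i ≤ j → b j ≤ b i) (hb_pos : ∀ i, 0 < b i)
    (n t : ℝ) (hn : 0 < n) (ht : 0 < t)
    (hfeas : n ≤ ∑ j, finv j t)
    (i : Fin k) (hik : (i : ℕ) < k - 1)
    (hi : ∑ m ∈ univ.filter (fun m => i < m), finv m t ≤ n)
    (himin : ∀ i' : Fin k, i' < i → n < ∑ m ∈ univ.filter (fun m => i' < m), finv m t)
    (X : Fin k → ℝ)
    (hX : ∀ j : Fin k, X j =
      if (j : ℕ) < (i : ℕ) then 0
      else if j = i then n - ∑ m ∈ univ.filter (fun m => i < m), finv m t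
      else finv j t) :
    ∀ Y : Fin k → ℝ, (∀ j, 0 ≤ Y j) → (∑ j, Y j = n) →
      (∀ j, f j (Y j) ≤ t) → ∑ j, b j * X j ≤ ∑ j, b j * Y j := by
  intro Y hY0 hYsum hYt
  set S := ∑ m ∈ univ.filter (fun m => i < m), finv m t with hS
  -- Y j ≤ finv j t
  have hYle : ∀ j, Y j ≤ finv j t := by
    intro j
    by_contra h
    push_neg at h
    have h1 := (hmono j) (hinv j t ht.le).1 (hY0 j) h
    rw [(hinv j t ht.le).2] at h1
    exact absurd (hYt j) (not_le.mpr h1)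
  -- sum of X is n
  have hsumX : ∑ j, X j = n := by
    rw [← Finset.sum_filter_add_sum_filter_not univ (fun m => i < m) X]
    have h1 : ∑ j ∈ univ.filter (fun m => i < m), X j = S := by
      apply Finset.sum_congr rfl
      intro j hj
      rw [Finset.mem_filter] at hj
      have hij : i < j := hj.2
      rw [hX j, if_neg (not_lt.mpr (Fin.le_iff_val_le_val.mp hij.le)), if_neg hij.ne']
    have h2 : ∑ j ∈ univ.filter (fun m => ¬ i < m), X j = n - S := by
      rw [Finset.sum_eq_single_of_mem i (by simp)]
      · rw [hX i]; simp
      · intro j hj hji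
        rw [Finset.mem_filter] at hj
        have : j < i := lt_of_le_of_ne (not_lt.mp hj.2) hji
        rw [hX j, if_pos (Fin.lt_iff_val_lt_val.mp this)]
    rw [h1, h2]; ring
  -- termwise key inequality
  have key : ∀ j : Fin k, b i * (Y j - X j) ≤ b j * (Y j - X j) := by
    intro j
    rcases lt_trichotomy j i with h | h | h
    · have hx : X j = 0 := by rw [hX j, if_pos (Fin.lt_iff_val_lt_val.mp h)]
      have hd : 0 ≤ Y j - X j := by rw [hx]; simpa using hY0 j
      exact mul_le_mul_of_nonneg_right (hb_anti j i h.le) hd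
    · rw [h]
    · have hx : X j = finv j t := by
        rw [hX j, if_neg (by exact not_lt.mpr (Fin.le_iff_val_le_val.mp h.le)),
          if_neg h.ne']
      have hd : Y j - X j ≤ 0 := by rw [hx]; linarith [hYle j]
      exact mul_le_mul_of_nonpos_right (hb_anti i j h.le) hd
  have h0 : (0:ℝ) ≤ ∑ j, b j * (Y j - X j) := by
    calc (0:ℝ) = b i * (∑ j, (Y j - X j)) := by
          rw [Finset.sum_sub_distrib, hYsum, hsumX, sub_self, mul_zero]
      _ = ∑ j, b i * (Y j - X j) := Finset.mul_sum _ _ _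
      _ ≤ ∑ j, b j * (Y j - X j) := Finset.sum_le_sum fun j _ => key j
  have := Finset.sum_sub_distrib (s := (univ : Finset (Fin k)))
    (f := fun j => b j * Y j) (g := fun j => b j * X j)
  simp only [← mul_sub] at this
  linarith [h0, this]
end

section
/- Let all functions be linear: f_i(x) = a_i x with a_i > 0, and g_i(x) = b_i x with b_0 ≥ ⋯ ≥ b_{k−1} > 0. Then on each segment where the exit index s of PARTITION is constant, the Pareto front is the affine function of t given by P(t) = b_s · n − t · ∑_{j=s+1}^{k−1} (b_s − b_j)/a_j, so the Pareto front is piecewise linear with at most k−1 pieces. -/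
open Finset

/-- in the all-linear case, on each segment where the exit index s
of PARTITION is constant, the Pareto front (the minimal sum objective as a
function of t) is the affine function P(t) = b_s·n − t·∑_{j>s} (b_s − b_j)/a_j. -/
theorem linear_pareto_front_affine
    (k : ℕ) (hk : 2 ≤ k) (a b : Fin k → ℝ)
    (ha : ∀ i, 0 < a i)
    (hb_anti : ∀ i j : Fin k, i ≤ j → b j ≤ b i) (hb_pos : ∀ i, 0 < b i)
    (n t : ℝ) (hn : 0 < n) (ht : 0 < t)
    (hfeas : n ≤ ∑ j, t / a j)
    (s : Fin k) (hsk : (s : ℕ) < k - 1)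
    (hs : ∑ m ∈ univ.filter (fun m => s < m), t / a m ≤ n)
    (hsmin : ∀ s' : Fin k, s' < s → n < ∑ m ∈ univ.filter (fun m => s' < m), t / a m) :
    IsLeast {e | ∃ y : Fin k → ℝ, (∀ j, 0 ≤ y j) ∧ (∑ j, y j = n) ∧
        (∀ j, a j * y j ≤ t) ∧ e = ∑ j, b j * y j}
      (b s * n - t * ∑ j ∈ univ.filter (fun j => s < j), (b s - b j) / a j) := by
  have haj : ∀ j, a j ≠ 0 := fun j => (ha j).ne'
  set S := ∑ j ∈ univ.filter (fun j => s < j), t / a j with hS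
  set T := ∑ j ∈ univ.filter (fun j => s < j), (b s - b j) / a j with hT
  -- key algebraic identity
  have hterm : ∀ j ∈ univ.filter (fun j => s < j),
      t * ((b s - b j) / a j) = b s * (t / a j) - b j * (t / a j) := by
    intro j _
    field_simp
  have hkey : b s * n - t * T
      = b s * (n - S) + ∑ j ∈ univ.filter (fun j => s < j), b j * (t / a j) := by
    rw [hT, hS, Finset.mul_sum, Finset.sum_congr rfl hterm, Finset.sum_sub_distrib,
      ← Finset.mul_sum]
    ring
  -- n ≤ t / a s + S
  have hns : n ≤ t / a s + S := by
    rcases Nat.eq_zero_or_pos s.val with h0 | hpos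
    · have hfs : univ.filter (fun j => ¬ s < j) = {s} := by
        ext j
        simp only [mem_filter, mem_univ, true_and, mem_singleton, not_lt, Fin.le_def,
          Fin.ext_iff, h0]
        omega
      have := Finset.sum_filter_add_sum_filter_not univ (fun j => s < j) (fun j => t / a j)
      rw [hfs, Finset.sum_singleton] at this
      rw [← hS] at this
      linarith [hfeas, this]
    · set s' : Fin k := ⟨s.val - 1, by omega⟩ with hs'
      have hlt : s' < s := by
        rw [Fin.lt_def]
        simp [hs']
        omega
      have hins : univ.filter (fun m => s' < m) = insert s (univ.filter (fun m => s < m)) := by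
        ext j
        simp only [mem_filter, mem_univ, true_and, mem_insert, Fin.lt_def, Fin.ext_iff, hs']
        omega
      have h2 := hsmin s' hlt
      rw [hins, Finset.sum_insert (by simp)] at h2
      rw [← hS] at h2
      linarith
  have hSn : S ≤ n := hs
  -- witness
  constructor
  · refine ⟨fun j => (if s < j then t / a j else 0) + (if j = s then n - S else 0), ?_, ?_, ?_, ?_⟩
    · intro j
      have h1 : 0 ≤ n - S := by linarith
      have h2 : 0 ≤ t / a j := le_of_lt (div_pos ht (ha j))
      dsimp only
      split_ifs <;> simp <;> linarith
    · rw [Finset.sum_add_distrib, Finset.sum_ite_eq' univ s (fun _ => n - S), ← Finset.sum_filter]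
      rw [← hS]
      simp
    · intro j
      by_cases hj : s < j
      · have hjs : j ≠ s := fun h => absurd (h ▸ hj) (lt_irrefl s)
        simp only [hj, if_true, hjs, if_false, add_zero]
        rw [mul_div_assoc', mul_comm, mul_div_assoc, div_self (haj j), mul_one]
      · by_cases hj2 : j = s
        · subst hj2
          simp only [hj, if_false, if_true, zero_add]
          have h1 : n - S ≤ t / a j := by linarith
          calc a j * (n - S) ≤ a j * (t / a j) := by
                exact mul_le_mul_of_nonneg_left h1 (ha j).le
            _ = t := by rw [mul_comm, div_mul_cancel₀ t (haj j)]
        · simp only [hj, if_false, hj2, if_false, add_zero, mul_zero]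
          linarith
    · simp_rw [mul_add, Finset.sum_add_distrib, mul_ite, mul_zero]
      rw [Finset.sum_ite_eq' univ s (fun x => b x * (n - S)), ← Finset.sum_filter]
      simp only [mem_univ, if_true]
      rw [hkey]
      ring
  -- lower bound
  · rintro e ⟨y, hy0, hysum, hyt, rfl⟩
    have hyle : ∀ j, y j ≤ t / a j := by
      intro j
      rw [le_div_iff₀ (ha j)]
      calc y j * a j = a j * y j := mul_comm _ _
        _ ≤ t := hyt j
    have hsplit : ∑ j, b j * y j = b s * n + ∑ j, (b j - b s) * y j := by
      rw [← hysum, Finset.mul_sum, ← Finset.sum_add_distrib]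
      congr 1; ext j; ring
    have h1 : ∑ j ∈ univ.filter (fun j => s < j), (b j - b s) * y j
        ≤ ∑ j, (b j - b s) * y j := by
      apply Finset.sum_le_sum_of_subset_of_nonneg (Finset.filter_subset _ _)
      intro j _ hj
      simp only [mem_filter, mem_univ, true_and, not_lt] at hj
      have : b s ≤ b j := hb_anti j s hj
      have := hy0 j
      nlinarith
    have h2 : ∑ j ∈ univ.filter (fun j => s < j), (b j - b s) * (t / a j)
        ≤ ∑ j ∈ univ.filter (fun j => s < j), (b j - b s) * y j := by
      apply Finset.sum_le_sum
      intro j hj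
      simp only [mem_filter, mem_univ, true_and] at hj
      have hbj : b j - b s ≤ 0 := by
        have : b j ≤ b s := hb_anti s j hj.le
        linarith
      exact mul_le_mul_of_nonpos_left (hyle j) hbj
    have h3 : ∑ j ∈ univ.filter (fun j => s < j), (b j - b s) * (t / a j) = - (t * T) := by
      rw [hT, Finset.mul_sum, ← Finset.sum_neg_distrib]
      apply Finset.sum_congr rfl
      intro j _
      field_simp
      ring
    rw [hsplit]
    rw [h3] at h2
    linarith
end

section
/- For sets of numbers: if every feasible X with E(X) ≤ ε satisfies ∑_{j≥i} x_j ≤ σ_i where E(X) = ∑ g_j(x_j) with g_j ≥ 0, then any X with ∑_{j≥i} x_j > σ_i has E(X) > ε and hence, given the sum-threshold soundness, is dominated by X_min; therefore the branch-and-bound combining both cuts never discards a Pareto-optimal solution. -/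
open Finset

/-- combined soundness of the two cuts. If ε = E(X_min) with
X_min a minimizer of T, and σ satisfies the size-threshold property (every
feasible X with E(X) ≤ ε has ∑_{j≥i} x_j ≤ σ_i), then every Pareto-optimal
feasible solution X either survives both cuts (g_j(x_j) ≤ ε for all j and
∑_{j≥i} x_j ≤ σ_i for all i) or has the same objective values as X_min; hence
the branch-and-bound never discards a Pareto-optimal solution. -/
theorem combined_cuts_sound
    (k : ℕ) (hk : 0 < k) (n : ℕ)
    (D : Fin k → Finset ℕ)
    (f g : Fin k → ℕ → ℝ)
    (hf : ∀ i x, 0 ≤ f i x) (hg : ∀ i x, 0 ≤ g i x)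
    (σ : Fin k → ℕ) :
    let Feas : Set (Fin k → ℕ) := {X | (∀ i, X i ∈ D i ∨ X i = 0) ∧ ∑ i, X i = n}
    let T : (Fin k → ℕ) → ℝ := fun X =>
      univ.sup' (univ_nonempty_iff.mpr (Fin.pos_iff_nonempty.mp hk))
        (fun i => f i (X i))
    let E : (Fin k → ℕ) → ℝ := fun X => ∑ i, g i (X i)
    ∀ Xmin ∈ Feas, (∀ X ∈ Feas, T Xmin ≤ T X) →
      (∀ X ∈ Feas, E X ≤ E Xmin →
        ∀ i, ∑ j ∈ univ.filter (fun j => i ≤ j), X j ≤ σ i) →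
      ∀ X ∈ Feas,
        (¬∃ Y ∈ Feas, T Y ≤ T X ∧ E Y ≤ E X ∧ (T Y, E Y) ≠ (T X, E X)) →
        (((∀ j, g j (X j) ≤ E Xmin) ∧
          ∀ i, ∑ j ∈ univ.filter (fun j => i ≤ j), X j ≤ σ i) ∨
         (T X = T Xmin ∧ E X = E Xmin)) := by
  intro Feas T E Xmin hXmin hTmin hσ X hX hPareto
  by_cases hE : E X ≤ E Xmin
  · left
    refine ⟨fun j => le_trans ?_ hE, hσ X hX hE⟩
    exact Finset.single_le_sum (fun i _ => hg i (X i)) (Finset.mem_univ j)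
  · exfalso
    push_neg at hE
    apply hPareto
    exact ⟨Xmin, hXmin, hTmin X hX, le_of_lt hE,
      fun h => absurd (congrArg Prod.snd h) (ne_of_lt hE)⟩
end

section
/- Merging Pareto fronts: let A, B ⊆ ℝ² be the Pareto fronts of finite sets S_A, S_B. Define S = { (max(t₁,t₂), e₁ + e₂) : (t₁,e₁) ∈ S_A, (t₂,e₂) ∈ S_B }. Then the Pareto front of S equals the Pareto front of { (max(t₁,t₂), e₁ + e₂) : (t₁,e₁) ∈ A, (t₂,e₂) ∈ B }; i.e., it suffices to combine only Pareto-optimal points of the two parts. -/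
/-!
Pareto fronts are the sets of minimal elements for the product order on `ℝ × ℝ`. In a finite
set every point lies above a minimal one, and `(p, q) ↦ (max p.1 q.1, p.2 + q.2)` is monotone
in each argument, so every merged point lies above a merge of Pareto-optimal points. A subset
lying below every point of the whole set has the same minimal elements as the whole set.
-/

open Set

theorem setOf_minimal_eq_of_subset_of_forall_exists_le {α : Type*} [PartialOrder α]
    {s t : Set α} (hts : t ⊆ s) (hdom : ∀ x ∈ s, ∃ y ∈ t, y ≤ x) :
    {x | Minimal (· ∈ s) x} = {x | Minimal (· ∈ t) x} := by
  ext x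
  constructor
  · intro hx
    obtain ⟨y, hyt, hyx⟩ := hdom x hx.prop
    obtain rfl : y = x := hx.eq_of_le (hts hyt) hyx
    exact hx.mono hts hyt
  · intro hx
    refine ⟨hts hx.prop, fun y hys hyx => ?_⟩
    obtain ⟨z, hzt, hzy⟩ := hdom y hys
    exact (hx.le_of_le hzt (hzy.trans hyx)).trans hzy

theorem Set.IsPWO.forall_exists_image2_minimal_le {α β γ : Type*} [Preorder α] [Preorder β]
    [Preorder γ] {f : α → β → γ} (hf₁ : ∀ b, Monotone (f · b)) (hf₂ : ∀ a, Monotone (f a))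
    {s : Set α} {t : Set β} (hs : s.IsPWO) (ht : t.IsPWO) :
    ∀ c ∈ image2 f s t,
      ∃ d ∈ image2 f {a | Minimal (· ∈ s) a} {b | Minimal (· ∈ t) b}, d ≤ c := by
  rintro _ ⟨a, ha, b, hb, rfl⟩
  obtain ⟨a', ha'a, ha'⟩ := hs.exists_le_minimal ha
  obtain ⟨b', hb'b, hb'⟩ := ht.exists_le_minimal hb
  exact ⟨f a' b', mem_image2_of_mem ha' hb', (hf₁ b' ha'a).trans (hf₂ a hb'b)⟩

theorem minimal_mem_iff_not_exists_le_ne {α : Type*} [PartialOrder α] {s : Set α} {x : α} :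
    Minimal (· ∈ s) x ↔ x ∈ s ∧ ¬∃ y ∈ s, y ≤ x ∧ y ≠ x := by
  simp only [minimal_iff, not_exists, not_and, not_not, eq_comm (a := x)]

/-- merging Pareto fronts. Combining points by
(t₁,e₁) ⊕ (t₂,e₂) = (max(t₁,t₂), e₁+e₂), the Pareto front of the combination
of two finite sets equals the Pareto front of the combination of their Pareto
fronts: it suffices to combine only Pareto-optimal points of the parts. -/
theorem merge_pareto_fronts
    (SA SB : Set (ℝ × ℝ)) (hA : SA.Finite) (hB : SB.Finite) :
    let pareto : Set (ℝ × ℝ) → Set (ℝ × ℝ) := fun S =>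
      {p | p ∈ S ∧ ¬∃ q ∈ S, q.1 ≤ p.1 ∧ q.2 ≤ p.2 ∧ q ≠ p}
    let comb : Set (ℝ × ℝ) → Set (ℝ × ℝ) → Set (ℝ × ℝ) := fun S T =>
      {r | ∃ p ∈ S, ∃ q ∈ T, r = (max p.1 q.1, p.2 + q.2)}
    pareto (comb SA SB) = pareto (comb (pareto SA) (pareto SB)) := by
  intro pareto comb
  let merge (p q : ℝ × ℝ) : ℝ × ℝ := (max p.1 q.1, p.2 + q.2)
  have hpareto (S : Set (ℝ × ℝ)) : pareto S = {x | Minimal (· ∈ S) x} := by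
    ext p
    simp only [pareto, mem_ofPred_eq, minimal_mem_iff_not_exists_le_ne, Prod.le_def, and_assoc]
  have hcomb (S T : Set (ℝ × ℝ)) : comb S T = image2 merge S T := by
    ext r
    simp only [comb, mem_image2, mem_ofPred_eq, eq_comm]; rfl
  have hmerge₁ (q : ℝ × ℝ) : Monotone (merge · q) := fun p p' h =>
    ⟨max_le_max_right _ h.1, add_le_add_left h.2 _⟩
  have hmerge₂ (p : ℝ × ℝ) : Monotone (merge p) := fun q q' h =>
    ⟨max_le_max_left _ h.1, add_le_add_right h.2 _⟩
  simp only [hpareto, hcomb]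
  exact setOf_minimal_eq_of_subset_of_forall_exists_le
    (image2_subset (fun _ h => h.prop) (fun _ h => h.prop))
    (hA.isPWO.forall_exists_image2_minimal_le hmerge₁ hmerge₂ hB.isPWO)
end
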